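/- Let r₁, …, r_k, r ∈ ℂ^d be vectors with all coordinates nonzero, having nonnegative real and imaginary parts, coordinate-wise modulus at most R > 0, and satisfying coordinate-wise Re((r₁ × ⋯ × r_k)_l)/R^k ≤ Re(r_l)/R and Im((r₁ × ⋯ × r_k)_l)/R^k = Im(r_l)/R, where × denotes coordinate-wise (Hadamard) product. Then for all entity vectors z₀, …, z_k ∈ ℂ^d with coordinates in the unit box [0,1]×[0,1] and nonzero, and for each coordinate l such that arg((r_i)_l) + arg((z_{i−1})_l) − arg((z_i)_l) = 0 for all i ∈ {1,…,k}, we have ∏_{i=1}^k (φ_l(z_{i−1}, r_i, z_i)/(2R)) ≤ φ_l(z₀, r, z_k)/(2R), where φ_l(x, s, y) := Re(x_l·s_l·conj(y_l)). -/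

import Mathlib

/-!
Under the phase condition every body factor is the real number `|z_{i-1}| |r_i| |z_i| / (2R)`.
In their product the inner moduli `|z_i|` occur squared, and `|z|² ≤ 2` on the unit box, so the
left side is at most `|z_0| |z_k| P / (2 R^k)` with `P = ∏ |r_i|`. The phases telescope:
`∏ r_i = P e^{iθ}` with `θ = arg z_k - arg z_0 ∈ [-π/2, π/2]`, while the head triple equals
`|z_0| |z_k| Re (r e^{-iθ})`. Pairing the two hypotheses on `∏ r_i` with `(cos θ, sin θ)`, where
`cos θ ≥ 0`, gives `P / R^k ≤ Re (r e^{-iθ}) / R`.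
-/

open Complex ComplexConjugate

theorem Fin.sum_univ_succ_sub_castSucc {M : Type*} [AddCommGroup M] :
    ∀ {n : ℕ} (f : Fin (n + 1) → M),
      ∑ i : Fin n, (f i.succ - f i.castSucc) = f (Fin.last n) - f 0
  | 0, f => by simp
  | n + 1, f => by
    have ih := Fin.sum_univ_succ_sub_castSucc (fun i => f i.castSucc)
    simp only [Fin.castSucc_zero, ← Fin.succ_castSucc] at ih
    rw [Fin.sum_univ_castSucc, ih, ← Fin.succ_last]
    abel

theorem Fin.prod_castSucc_mul_succ_div_le {n : ℕ} {M : ℝ} (a : Fin (n + 2) → ℝ)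
    (ha : ∀ i, 0 ≤ a i) (haM : ∀ i, a i ^ 2 ≤ M) :
    ∏ i : Fin (n + 1), a i.castSucc * a i.succ / M ≤ a 0 * a (Fin.last _) / M := by
  induction n with
  | zero => simp
  | succ n ih =>
    have hM : 0 ≤ M := (sq_nonneg _).trans (haM 0)
    set m := Fin.last (n + 1)
    have ih' := ih (fun i => a i.castSucc) (fun i => ha _) (fun i => haM _)
    simp only [Fin.castSucc_zero, ← Fin.succ_castSucc] at ih'
    rw [Fin.prod_univ_castSucc, Fin.succ_last]
    calc (∏ i : Fin (n + 1), a i.castSucc.castSucc * a i.castSucc.succ / M)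
          * (a m.castSucc * a (Fin.last _) / M)
        ≤ a 0 * a m.castSucc / M * (a m.castSucc * a (Fin.last _) / M) :=
          mul_le_mul_of_nonneg_right ih' (div_nonneg (mul_nonneg (ha _) (ha _)) hM)
      _ = a 0 * a (Fin.last _) / M * (a m.castSucc ^ 2 / M) := by ring
      _ ≤ a 0 * a (Fin.last _) / M := by
          refine mul_le_of_le_one_right ?_ (div_le_one_of_le₀ (haM _) hM)
          exact div_nonneg (mul_nonneg (ha _) (ha _)) hM

namespace Complex

theorem prod_eq_norm_mul_exp_sum_arg {ι : Type*} (s : Finset ι) (f : ι → ℂ) :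
    ∏ i ∈ s, f i = (∏ i ∈ s, ‖f i‖ : ℝ) * exp ((∑ i ∈ s, arg (f i) : ℝ) * I) := by
  push_cast
  rw [Finset.sum_mul, exp_sum, ← Finset.prod_mul_distrib]
  exact Finset.prod_congr rfl fun i _ => (norm_mul_exp_arg_mul_I (f i)).symm

theorem mul_conj_eq_norm_mul_exp (x w : ℂ) :
    x * conj w = (‖x‖ * ‖w‖ : ℝ) * exp ((arg x - arg w : ℝ) * I) := by
  conv_lhs => rw [← norm_mul_exp_arg_mul_I x, ← norm_mul_exp_arg_mul_I w]
  rw [map_mul, conj_ofReal, ← exp_conj, map_mul, conj_ofReal, conj_I]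
  push_cast
  rw [sub_mul, sub_eq_add_neg, exp_add]
  ring_nf

theorem mul_mul_conj_of_arg_add_arg_eq {x y w : ℂ} (h : arg x + arg y = arg w) :
    x * y * conj w = (‖x‖ * ‖y‖ * ‖w‖ : ℝ) := by
  have hexp : exp ((-arg y : ℝ) * I) * exp (arg y * I) = 1 := by
    rw [← exp_add]; push_cast; ring_nf; exact exp_zero
  calc x * y * conj w = (‖x‖ * ‖w‖ : ℝ) * exp ((-arg y : ℝ) * I) * (‖y‖ * exp (arg y * I)) := by
        rw [mul_right_comm, mul_conj_eq_norm_mul_exp, norm_mul_exp_arg_mul_I,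
          show arg x - arg w = -arg y by linarith]
    _ = (‖x‖ * ‖y‖ * ‖w‖ : ℝ) := by
        push_cast at hexp ⊢
        linear_combination (‖x‖ * ‖y‖ * ‖w‖ : ℂ) * hexp

theorem re_mul_mul_conj_eq (x y w : ℂ) :
    (x * y * conj w).re = ‖x‖ * ‖w‖ * (y * conj (exp ((arg w - arg x : ℝ) * I))).re := by
  have hconj : conj (exp ((arg w - arg x : ℝ) * I)) = exp ((arg x - arg w : ℝ) * I) := by
    rw [← exp_conj, map_mul, conj_ofReal, conj_I]
    push_cast
    ring_nf
  rw [mul_right_comm, mul_conj_eq_norm_mul_exp, hconj, mul_assoc, re_ofReal_mul, mul_comm y]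

theorem prod_eq_norm_mul_exp_of_arg_add_arg_eq {n : ℕ} {r : Fin n → ℂ} {z : Fin (n + 1) → ℂ}
    (h : ∀ i, arg (z i.castSucc) + arg (r i) = arg (z i.succ)) :
    ∏ i, r i = (∏ i, ‖r i‖ : ℝ) * exp ((arg (z (Fin.last n)) - arg (z 0) : ℝ) * I) := by
  rw [prod_eq_norm_mul_exp_sum_arg, ← Fin.sum_univ_succ_sub_castSucc (fun i => arg (z i))]
  simp only [fun i => show arg (r i) = arg (z i.succ) - arg (z i.castSucc) by linarith [h i]]

theorem cos_arg_sub_arg_nonneg {x w : ℂ} (hx_re : 0 ≤ x.re) (hx_im : 0 ≤ x.im) (hw_re : 0 ≤ w.re)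
    (hw_im : 0 ≤ w.im) : 0 ≤ Real.cos (arg w - arg x) := by
  apply Real.cos_nonneg_of_mem_Icc
  constructor
  · linarith [arg_nonneg_iff.mpr hw_im, arg_le_pi_div_two_iff.mpr (Or.inl hx_re)]
  · linarith [arg_nonneg_iff.mpr hx_im, arg_le_pi_div_two_iff.mpr (Or.inl hw_re)]

theorem div_le_re_mul_conj_div {t a b : ℝ} {u v : ℂ} (hu : ‖u‖ = 1) (hu_re : 0 ≤ u.re)
    (h_re : (t * u).re / a ≤ v.re / b) (h_im : (t * u).im / a = v.im / b) :
    t / a ≤ (v * conj u).re / b := by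
  rw [re_ofReal_mul] at h_re
  rw [im_ofReal_mul] at h_im
  have hsq : u.re * u.re + u.im * u.im = 1 := by
    rw [← normSq_apply, normSq_eq_norm_sq, hu, one_pow]
  calc t / a = t * u.re / a * u.re + t * u.im / a * u.im := by
        linear_combination (-(t / a)) * hsq
    _ ≤ v.re / b * u.re + v.im / b * u.im := by
        rw [h_im]
        gcongr
    _ = (v * conj u).re / b := by
        rw [mul_re, conj_re, conj_im]
        ring

end Complex

theorem horn_rule_injection_general (d k : ℕ) (hk : 1 ≤ k) (R : ℝ) (hR : 0 < R)
    (r : Fin k → Fin d → ℂ) (rh : Fin d → ℂ)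
    (hcond : ∀ l, (∏ i, r i l).re / R ^ k ≤ (rh l).re / R ∧
      (∏ i, r i l).im / R ^ k = (rh l).im / R)
    (z : Fin (k + 1) → Fin d → ℂ)
    (hzbox : ∀ i l, 0 ≤ (z i l).re ∧ (z i l).re ≤ 1 ∧ 0 ≤ (z i l).im ∧ (z i l).im ≤ 1)
    (l : Fin d)
    (hph : ∀ i : Fin k,
      Complex.arg (r i l) + Complex.arg (z i.castSucc l) - Complex.arg (z i.succ l) = 0) :
    (∏ i : Fin k, (z i.castSucc l * r i l * (starRingEnd ℂ) (z i.succ l)).re / (2 * R)) ≤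
      (z 0 l * rh l * (starRingEnd ℂ) (z (Fin.last k) l)).re / (2 * R) := by
  obtain ⟨n, rfl⟩ : ∃ n, k = n + 1 := ⟨k - 1, by omega⟩
  have harg : ∀ i, arg (z i.castSucc l) + arg (r i l) = arg (z i.succ l) :=
    fun i => by linarith [hph i]
  set u := exp ((arg (z (Fin.last _) l) - arg (z 0 l) : ℝ) * I)
  have hkey : (∏ i, ‖r i l‖) / R ^ (n + 1) ≤ (rh l * conj u).re / R := by
    obtain ⟨h_re, h_im⟩ := hcond l
    rw [prod_eq_norm_mul_exp_of_arg_add_arg_eq (z := fun i => z i l) harg] at h_re h_im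
    obtain ⟨hz0_re, -, hz0_im, -⟩ := hzbox 0 l
    obtain ⟨hzk_re, -, hzk_im, -⟩ := hzbox (Fin.last _) l
    refine div_le_re_mul_conj_div (norm_exp_ofReal_mul_I _) ?_ h_re h_im
    rw [exp_ofReal_mul_I_re]
    exact cos_arg_sub_arg_nonneg hz0_re hz0_im hzk_re hzk_im
  have hbody : ∀ i, (z i.castSucc l * r i l * conj (z i.succ l)).re / (2 * R)
      = ‖z i.castSucc l‖ * ‖z i.succ l‖ / 2 * (‖r i l‖ / R) := by
    intro i
    rw [mul_mul_conj_of_arg_add_arg_eq (harg i), ofReal_re]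
    ring
  have hz_sq : ∀ i, ‖z i l‖ ^ 2 ≤ 2 := by
    intro i
    obtain ⟨h1, h2, h3, h4⟩ := hzbox i l
    rw [Complex.sq_norm, normSq_apply]
    nlinarith
  calc ∏ i, (z i.castSucc l * r i l * conj (z i.succ l)).re / (2 * R)
      = (∏ i : Fin (n + 1), ‖z i.castSucc l‖ * ‖z i.succ l‖ / 2)
          * ((∏ i, ‖r i l‖) / R ^ (n + 1)) := by
        rw [Finset.prod_congr rfl fun i _ => hbody i, Finset.prod_mul_distrib,
          Finset.prod_div_distrib (fun i => ‖r i l‖), Finset.prod_const, Finset.card_univ,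
          Fintype.card_fin]
    _ ≤ ‖z 0 l‖ * ‖z (Fin.last _) l‖ / 2 * ((∏ i, ‖r i l‖) / R ^ (n + 1)) := by
        gcongr
        exact Fin.prod_castSucc_mul_succ_div_le (fun i => ‖z i l‖) (fun i => norm_nonneg _) hz_sq
    _ ≤ ‖z 0 l‖ * ‖z (Fin.last _) l‖ / 2 * ((rh l * conj u).re / R) := by gcongr
    _ = _ := by rw [re_mul_mul_conj_eq]; ring

theorem horn_rule_injection (d k : ℕ) (hd : 1 ≤ d) (hk : 1 ≤ k) (R : ℝ) (hR : 0 < R)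
    (r : Fin k → Fin d → ℂ) (rh : Fin d → ℂ)
    (hrne : ∀ i l, r i l ≠ 0) (hrhne : ∀ l, rh l ≠ 0)
    (hrq : ∀ i l, 0 ≤ (r i l).re ∧ 0 ≤ (r i l).im)
    (hrhq : ∀ l, 0 ≤ (rh l).re ∧ 0 ≤ (rh l).im)
    (hrR : ∀ i l, ‖r i l‖ ≤ R) (hrhR : ∀ l, ‖rh l‖ ≤ R)
    (hcond : ∀ l, (∏ i, r i l).re / R ^ k ≤ (rh l).re / R ∧
      (∏ i, r i l).im / R ^ k = (rh l).im / R)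
    (z : Fin (k + 1) → Fin d → ℂ)
    (hzne : ∀ i l, z i l ≠ 0)
    (hzbox : ∀ i l, 0 ≤ (z i l).re ∧ (z i l).re ≤ 1 ∧ 0 ≤ (z i l).im ∧ (z i l).im ≤ 1)
    (l : Fin d)
    (hph : ∀ i : Fin k,
      Complex.arg (r i l) + Complex.arg (z i.castSucc l) - Complex.arg (z i.succ l) = 0) :
    (∏ i : Fin k, (z i.castSucc l * r i l * (starRingEnd ℂ) (z i.succ l)).re / (2 * R)) ≤
      (z 0 l * rh l * (starRingEnd ℂ) (z (Fin.last k) l)).re / (2 * R) :=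
  horn_rule_injection_general d k hk R hR r rh hcond z hzbox l hph
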